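/- Let G be a connected simple graph on a finite vertex set of N ≥ 2 vertices. With λ₂(M) := inf { xᵀMx : ‖x‖ = 1, x ⊥ 𝟙 } and λ_max(M) := sup { xᵀMx : ‖x‖ = 1 }, the normalized algebraic connectivity of the Mellin-transformed path Laplacian satisfies lim_{s→0⁺} λ₂(L̃_Mell(s))/N = 1 and lim_{s→∞} λ₂(L̃_Mell(s)) = λ₂(L), where L is the ordinary graph Laplacian of G. -/
import Mathlib


open Finset Matrix Filter Real Topology

/-- The `d`-path Laplacian matrix of a graph `G` on `Fin N`:
`(L_d)_{ii} = #{j : dist(i,j) = d}`, `(L_d)_{ij} = -1` if `i ≠ j` and `dist(i,j) = d`,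
and `0` otherwise. -/
noncomputable def pathLaplacian {N : ℕ} (G : SimpleGraph (Fin N)) (d : ℕ) :
    Matrix (Fin N) (Fin N) ℝ := fun i j =>
  if i = j then ((univ.filter fun k => G.dist i k = d).card : ℝ)
  else if G.dist i j = d then -1 else 0

/-- The diameter `d_max` of `G`: the maximum shortest-path distance over all pairs. -/
noncomputable def graphDiam {N : ℕ} (G : SimpleGraph (Fin N)) : ℕ :=
  univ.sup fun p : Fin N × Fin N => G.dist p.1 p.2

/-- The Mellin-transformed path Laplacian `L̃_Mell(s) = Σ_{d=1}^{d_max} d^{-s} L_d`. -/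
noncomputable def mellinLap {N : ℕ} (G : SimpleGraph (Fin N)) (s : ℝ) :
    Matrix (Fin N) (Fin N) ℝ :=
  ∑ d ∈ Icc 1 (graphDiam G), (d : ℝ) ^ (-s) • pathLaplacian G d

/-- The Laplace-transformed path Laplacian `L̃_Lapl(λ) = L_1 + Σ_{d=2}^{d_max} e^{-λd} L_d`. -/
noncomputable def laplaceLap {N : ℕ} (G : SimpleGraph (Fin N)) (lam : ℝ) :
    Matrix (Fin N) (Fin N) ℝ :=
  pathLaplacian G 1 + ∑ d ∈ Icc 2 (graphDiam G), Real.exp (-(lam * d)) • pathLaplacian G d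

/-- `λ₂(M)`: infimum of the quadratic form over Euclidean-unit vectors orthogonal to
the all-ones vector. -/
noncomputable def lamTwo {N : ℕ} (M : Matrix (Fin N) (Fin N) ℝ) : ℝ :=
  sInf {r | ∃ x : Fin N → ℝ, ∑ i, x i ^ 2 = 1 ∧ ∑ i, x i = 0 ∧ r = x ⬝ᵥ M.mulVec x}

/-- `λ_max(M)`: supremum of the quadratic form over Euclidean-unit vectors. -/
noncomputable def lamMax {N : ℕ} (M : Matrix (Fin N) (Fin N) ℝ) : ℝ :=
  sSup {r | ∃ x : Fin N → ℝ, ∑ i, x i ^ 2 = 1 ∧ r = x ⬝ᵥ M.mulVec x}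

section Aux

variable {N : ℕ}

lemma quad_abs_le (M : Matrix (Fin N) (Fin N) ℝ) {x : Fin N → ℝ} (hx : ∑ i, x i ^ 2 = 1) :
    |x ⬝ᵥ M.mulVec x| ≤ ∑ i, ∑ j, |M i j| := by
  have habs : ∀ i, |x i| ≤ 1 := by
    intro i
    have h1 : x i ^ 2 ≤ 1 := hx ▸ Finset.single_le_sum (fun j _ => sq_nonneg (x j)) (mem_univ i)
    exact (sq_le_one_iff_abs_le_one _).mp h1
  have : x ⬝ᵥ M.mulVec x = ∑ i, ∑ j, x i * (M i j * x j) := by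
    simp [dotProduct, Matrix.mulVec, Finset.mul_sum]
  rw [this]
  calc |∑ i, ∑ j, x i * (M i j * x j)| ≤ ∑ i, |∑ j, x i * (M i j * x j)| :=
        Finset.abs_sum_le_sum_abs _ _
    _ ≤ ∑ i, ∑ j, |x i * (M i j * x j)| :=
        Finset.sum_le_sum fun i _ => Finset.abs_sum_le_sum_abs _ _
    _ ≤ ∑ i, ∑ j, |M i j| := by
        refine Finset.sum_le_sum fun i _ => Finset.sum_le_sum fun j _ => ?_
        rw [abs_mul, abs_mul]
        calc |x i| * (|M i j| * |x j|) ≤ 1 * (|M i j| * 1) :=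
              mul_le_mul (habs i) (mul_le_mul_of_nonneg_left (habs j) (abs_nonneg _))
                (by positivity) zero_le_one
          _ = |M i j| := by ring

lemma exists_unit_orth (hN : 2 ≤ N) :
    ∃ x : Fin N → ℝ, ∑ i, x i ^ 2 = 1 ∧ ∑ i, x i = 0 := by
  set i0 : Fin N := ⟨0, by omega⟩
  set i1 : Fin N := ⟨1, by omega⟩
  have hne : i0 ≠ i1 := by simp [i0, i1, Fin.ext_iff]
  set a : ℝ := (Real.sqrt 2)⁻¹ with ha
  have ha2 : a ^ 2 = 1 / 2 := by
    rw [ha, inv_pow, Real.sq_sqrt (by norm_num : (0:ℝ) ≤ 2)]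
    norm_num
  refine ⟨fun i => if i = i0 then a else if i = i1 then -a else 0, ?_, ?_⟩
  · have : ∀ i : Fin N, (if i = i0 then a else if i = i1 then -a else 0) ^ 2 =
        (if i = i0 then a ^ 2 else 0) + (if i = i1 then a ^ 2 else 0) := by
      intro i
      by_cases h0 : i = i0 <;> by_cases h1 : i = i1 <;> simp_all [h0, h1]
    simp only [this, Finset.sum_add_distrib, Finset.sum_ite_eq' univ, mem_univ, if_true]
    rw [ha2]; norm_num
  · have : ∀ i : Fin N, (if i = i0 then a else if i = i1 then -a else 0) =
        (if i = i0 then a else 0) + (if i = i1 then -a else 0) := by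
      intro i
      by_cases h0 : i = i0 <;> by_cases h1 : i = i1 <;> simp_all [h0, h1]
    simp only [this, Finset.sum_add_distrib, Finset.sum_ite_eq' univ, mem_univ, if_true]
    ring

lemma setS_nonempty (hN : 2 ≤ N) (M : Matrix (Fin N) (Fin N) ℝ) :
    {r | ∃ x : Fin N → ℝ, ∑ i, x i ^ 2 = 1 ∧ ∑ i, x i = 0 ∧ r = x ⬝ᵥ M.mulVec x}.Nonempty := by
  obtain ⟨x, h1, h2⟩ := exists_unit_orth hN
  exact ⟨_, x, h1, h2, rfl⟩

lemma setS_bddBelow (M : Matrix (Fin N) (Fin N) ℝ) :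
    BddBelow {r | ∃ x : Fin N → ℝ, ∑ i, x i ^ 2 = 1 ∧ ∑ i, x i = 0 ∧ r = x ⬝ᵥ M.mulVec x} := by
  refine ⟨-(∑ i, ∑ j, |M i j|), ?_⟩
  rintro r ⟨x, h1, _, rfl⟩
  exact neg_le_of_abs_le (quad_abs_le M h1)

lemma lamTwo_le_add (hN : 2 ≤ N) (M M' : Matrix (Fin N) (Fin N) ℝ) :
    lamTwo M ≤ lamTwo M' + ∑ i, ∑ j, |M i j - M' i j| := by
  rw [← sub_le_iff_le_add]
  show lamTwo M - _ ≤ lamTwo M'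
  unfold lamTwo
  apply le_csInf (setS_nonempty hN M')
  rintro r ⟨x, h1, h2, rfl⟩
  rw [sub_le_iff_le_add]
  have hle : sInf {r | ∃ x : Fin N → ℝ, ∑ i, x i ^ 2 = 1 ∧ ∑ i, x i = 0
      ∧ r = x ⬝ᵥ M.mulVec x} ≤ x ⬝ᵥ M.mulVec x :=
    csInf_le (setS_bddBelow M) ⟨x, h1, h2, rfl⟩
  have hdiff : |x ⬝ᵥ M.mulVec x - x ⬝ᵥ M'.mulVec x| ≤ ∑ i, ∑ j, |M i j - M' i j| := by
    have heq : x ⬝ᵥ M.mulVec x - x ⬝ᵥ M'.mulVec x = x ⬝ᵥ (M - M').mulVec x := by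
      rw [Matrix.sub_mulVec, dotProduct_sub]
    rw [heq]
    simpa using quad_abs_le (M - M') h1
  have := (abs_le.mp hdiff).2
  linarith

lemma lamTwo_abs_sub_le (hN : 2 ≤ N) (M M' : Matrix (Fin N) (Fin N) ℝ) :
    |lamTwo M - lamTwo M'| ≤ ∑ i, ∑ j, |M i j - M' i j| := by
  rw [abs_sub_le_iff]
  constructor
  · have := lamTwo_le_add hN M M'; linarith
  · have h := lamTwo_le_add hN M' M
    have heq : (∑ i, ∑ j, |M' i j - M i j|) = ∑ i, ∑ j, |M i j - M' i j| := by
      refine Finset.sum_congr rfl fun i _ => Finset.sum_congr rfl fun j _ => abs_sub_comm _ _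
    rw [heq] at h; linarith

lemma tendsto_lamTwo (hN : 2 ≤ N) {l : Filter ℝ} {Ms : ℝ → Matrix (Fin N) (Fin N) ℝ}
    {T : Matrix (Fin N) (Fin N) ℝ}
    (h : ∀ i j, Tendsto (fun s => Ms s i j) l (𝓝 (T i j))) :
    Tendsto (fun s => lamTwo (Ms s)) l (𝓝 (lamTwo T)) := by
  rw [tendsto_iff_norm_sub_tendsto_zero]
  have hg : Tendsto (fun s => ∑ i, ∑ j, |Ms s i j - T i j|) l (𝓝 0) := by
    have h0 : Tendsto (fun s => ∑ i, ∑ j, |Ms s i j - T i j|) l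
        (𝓝 (∑ _i : Fin N, ∑ _j : Fin N, (0:ℝ))) := by
      refine tendsto_finset_sum _ fun i _ => tendsto_finset_sum _ fun j _ => ?_
      have habs := ((h i j).sub (tendsto_const_nhds (x := T i j))).abs
      simpa using habs
    simpa using h0
  refine squeeze_zero (fun s => norm_nonneg _) (fun s => ?_) hg
  rw [Real.norm_eq_abs]
  exact lamTwo_abs_sub_le hN _ _

variable {G : SimpleGraph (Fin N)}

lemma dist_mem_Icc (hG : G.Connected) {i j : Fin N} (hne : i ≠ j) :
    G.dist i j ∈ Icc 1 (graphDiam G) := by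
  rw [Finset.mem_Icc]
  exact ⟨hG.pos_dist_of_ne hne, Finset.le_sup (f := fun p : Fin N × Fin N => G.dist p.1 p.2)
    (Finset.mem_univ (i, j))⟩

lemma graphDiam_pos (hG : G.Connected) (hN : 2 ≤ N) : 1 ≤ graphDiam G := by
  have hne : (⟨0, by omega⟩ : Fin N) ≠ ⟨1, by omega⟩ := by simp [Fin.ext_iff]
  exact (Finset.mem_Icc.mp (dist_mem_Icc hG hne)).1.trans
    (Finset.mem_Icc.mp (dist_mem_Icc hG hne)).2

lemma mellinLap_zero (hG : G.Connected) (hN : 2 ≤ N) (i j : Fin N) :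
    mellinLap G 0 i j = if i = j then (N:ℝ) - 1 else -1 := by
  have hentries : mellinLap G 0 i j = ∑ d ∈ Icc 1 (graphDiam G), pathLaplacian G d i j := by
    simp [mellinLap, Matrix.sum_apply]
  rw [hentries]
  by_cases hij : i = j
  · subst hij
    rw [if_pos rfl]
    have hdiag : ∀ d, pathLaplacian G d i i
        = ((univ.filter fun k => G.dist i k = d).card : ℝ) := by
      intro d; simp [pathLaplacian]
    rw [Finset.sum_congr rfl fun d _ => hdiag d]
    have key : ∑ d ∈ Icc 1 (graphDiam G), ((univ.filter fun k => G.dist i k = d).card)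
        = N - 1 := by
      have hflt : ∀ d ∈ Icc 1 (graphDiam G),
          (univ.filter fun k => G.dist i k = d)
            = ((univ.erase i).filter fun k => G.dist i k = d) := by
        intro d hd
        have hd1 : 1 ≤ d := (Finset.mem_Icc.mp hd).1
        ext k
        by_cases hk : k = i
        · subst hk
          simp only [Finset.mem_filter, Finset.mem_univ, true_and, Finset.mem_erase,
            ne_eq, not_true_eq_false, false_and, iff_false, SimpleGraph.dist_self]
          omega
        · simp [Finset.mem_filter, Finset.mem_erase, hk]
      rw [Finset.sum_congr rfl fun d hd => by rw [hflt d hd]]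
      have hfib : (univ.erase i).card = ∑ d ∈ Icc 1 (graphDiam G),
          ((univ.erase i).filter fun k => G.dist i k = d).card := by
        apply Finset.card_eq_sum_card_fiberwise
        intro k hk
        have hki : k ≠ i := (Finset.mem_erase.mp hk).1
        have := dist_mem_Icc hG hki.symm
        exact this
      rw [← hfib, Finset.card_erase_of_mem (Finset.mem_univ i), Finset.card_univ,
        Fintype.card_fin]
    have hcast := congrArg (fun n : ℕ => (n : ℝ)) key
    push_cast at hcast
    rw [hcast, Nat.cast_sub (by omega : 1 ≤ N)]
    push_cast
    ring
  · rw [if_neg hij]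
    have hoff : ∀ d, pathLaplacian G d i j = if G.dist i j = d then (-1:ℝ) else 0 := by
      intro d; simp [pathLaplacian, hij]
    rw [Finset.sum_congr rfl fun d _ => hoff d]
    rw [Finset.sum_ite_eq (Icc 1 (graphDiam G)) (G.dist i j) (fun _ => (-1:ℝ))]
    rw [if_pos (dist_mem_Icc hG hij)]

lemma quad_mellin_zero (hG : G.Connected) (hN : 2 ≤ N) {x : Fin N → ℝ}
    (h1 : ∑ i, x i ^ 2 = 1) (h2 : ∑ i, x i = 0) :
    x ⬝ᵥ (mellinLap G 0).mulVec x = N := by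
  have hmv : (mellinLap G 0).mulVec x = fun i => (N:ℝ) * x i := by
    funext i
    simp only [Matrix.mulVec, dotProduct]
    have hterm : ∀ j, mellinLap G 0 i j * x j = (N:ℝ) * (if i = j then x j else 0) - x j := by
      intro j
      rw [mellinLap_zero hG hN]
      by_cases h : i = j <;> simp [h] <;> ring
    rw [Finset.sum_congr rfl fun j _ => hterm j, Finset.sum_sub_distrib, ← Finset.mul_sum,
      Finset.sum_ite_eq univ i x, if_pos (Finset.mem_univ i), h2, sub_zero]
  rw [hmv]
  simp only [dotProduct]
  calc ∑ i, x i * ((N:ℝ) * x i) = (N:ℝ) * ∑ i, x i ^ 2 := by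
        rw [Finset.mul_sum]; exact Finset.sum_congr rfl fun i _ => by ring
    _ = N := by rw [h1, mul_one]

lemma lamTwo_mellinLap_zero (hG : G.Connected) (hN : 2 ≤ N) :
    lamTwo (mellinLap G 0) = N := by
  unfold lamTwo
  have hset : {r | ∃ x : Fin N → ℝ, ∑ i, x i ^ 2 = 1 ∧ ∑ i, x i = 0
      ∧ r = x ⬝ᵥ (mellinLap G 0).mulVec x} = {(N:ℝ)} := by
    ext r
    simp only [Set.mem_setOf_eq, Set.mem_singleton_iff]
    constructor
    · rintro ⟨x, hx1, hx2, rfl⟩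
      exact quad_mellin_zero hG hN hx1 hx2
    · rintro rfl
      obtain ⟨x, hx1, hx2⟩ := exists_unit_orth hN
      exact ⟨x, hx1, hx2, (quad_mellin_zero hG hN hx1 hx2).symm⟩
  rw [hset, csInf_singleton]

lemma pathLaplacian_one_eq (G : SimpleGraph (Fin N)) [DecidableRel G.Adj] :
    pathLaplacian G 1 = G.lapMatrix ℝ := by
  ext i j
  by_cases hij : i = j
  · subst hij
    have hfilt : (univ.filter fun k => G.dist i k = 1) = G.neighborFinset i := by
      ext k
      simp [SimpleGraph.dist_eq_one_iff_adj, SimpleGraph.mem_neighborFinset]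
    rw [show pathLaplacian G 1 i i = ((univ.filter fun k => G.dist i k = 1).card : ℝ) by
      simp [pathLaplacian]]
    rw [hfilt]
    rw [SimpleGraph.lapMatrix, Matrix.sub_apply, SimpleGraph.degMatrix,
      Matrix.diagonal_apply_eq, SimpleGraph.adjMatrix_apply, if_neg (G.irrefl), sub_zero,
      SimpleGraph.degree]
  · simp only [pathLaplacian, if_neg hij, SimpleGraph.lapMatrix, Matrix.sub_apply,
      SimpleGraph.degMatrix, Matrix.diagonal_apply_ne _ hij, SimpleGraph.adjMatrix_apply,
      zero_sub, SimpleGraph.dist_eq_one_iff_adj]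
    by_cases h : G.Adj i j <;> simp [h]

lemma mellin_entry_continuous (G : SimpleGraph (Fin N)) (i j : Fin N) :
    Continuous fun s : ℝ => mellinLap G s i j := by
  have hfun : (fun s : ℝ => mellinLap G s i j)
      = fun s => ∑ d ∈ Icc 1 (graphDiam G), (d:ℝ) ^ (-s) * pathLaplacian G d i j := by
    funext s
    simp [mellinLap, Matrix.sum_apply]
  rw [hfun]
  apply continuous_finset_sum
  intro d hd
  have hd1 : 1 ≤ d := (Finset.mem_Icc.mp hd).1
  have hd0 : (d:ℝ) ≠ 0 := Nat.cast_ne_zero.mpr (by omega)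
  refine Continuous.mul ?_ continuous_const
  refine continuous_iff_continuousAt.mpr fun s => ?_
  exact (Real.continuousAt_const_rpow hd0).comp continuous_neg.continuousAt

lemma mellin_entry_tendsto_atTop (hG : G.Connected) (hN : 2 ≤ N) (i j : Fin N) :
    Tendsto (fun s : ℝ => mellinLap G s i j) atTop (𝓝 (pathLaplacian G 1 i j)) := by
  have h1D : (1:ℕ) ∈ Icc 1 (graphDiam G) :=
    Finset.mem_Icc.mpr ⟨le_refl 1, graphDiam_pos hG hN⟩
  have htarget : pathLaplacian G 1 i j = ∑ d ∈ Icc 1 (graphDiam G),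
      (if d = 1 then pathLaplacian G 1 i j else 0) := by
    rw [Finset.sum_ite_eq' (Icc 1 (graphDiam G)) 1 (fun _ => pathLaplacian G 1 i j),
      if_pos h1D]
  have hfun : (fun s : ℝ => mellinLap G s i j)
      = fun s => ∑ d ∈ Icc 1 (graphDiam G), (d:ℝ) ^ (-s) * pathLaplacian G d i j := by
    funext s
    simp [mellinLap, Matrix.sum_apply]
  rw [hfun, htarget]
  refine tendsto_finset_sum _ fun d hd => ?_
  by_cases h1 : d = 1
  · subst h1
    simp only [if_pos rfl, Nat.cast_one, Real.one_rpow, one_mul]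
    exact tendsto_const_nhds
  · rw [if_neg h1]
    have hd2 : 2 ≤ d := by have := (Finset.mem_Icc.mp hd).1; omega
    have hd1 : (1:ℝ) < (d:ℝ) := by exact_mod_cast (by omega : 1 < d)
    have hlog : 0 < Real.log d := Real.log_pos hd1
    have hrp : Tendsto (fun s : ℝ => (d:ℝ) ^ (-s)) atTop (𝓝 0) := by
      have hde : (fun s : ℝ => (d:ℝ) ^ (-s)) = fun s => Real.exp (-Real.log d * s) := by
        funext s
        rw [Real.rpow_def_of_pos (by positivity), mul_neg, neg_mul]
      rw [hde]
      exact Real.tendsto_exp_atBot.comp (tendsto_id.const_mul_atTop_of_neg (by linarith))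
    simpa using hrp.mul_const (pathLaplacian G d i j)

end Aux

/-- `lim_{s→0⁺} λ₂(L̃_Mell(s))/N = 1` and
`lim_{s→∞} λ₂(L̃_Mell(s)) = λ₂(L)`, where `L` is the ordinary graph Laplacian of `G`. -/
theorem lamTwo_mellinLap_limits {N : ℕ} (G : SimpleGraph (Fin N)) [DecidableRel G.Adj]
    (hG : G.Connected) (hN : 2 ≤ N) :
    Filter.Tendsto (fun s : ℝ => lamTwo (mellinLap G s) / N) (𝓝[>] 0) (𝓝 1) ∧
      Filter.Tendsto (fun s : ℝ => lamTwo (mellinLap G s)) Filter.atTop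
        (𝓝 (lamTwo (G.lapMatrix ℝ))) := by
  constructor
  · have h1 : Tendsto (fun s : ℝ => lamTwo (mellinLap G s)) (𝓝[>] (0:ℝ))
        (𝓝 (lamTwo (mellinLap G 0))) :=
      tendsto_lamTwo hN fun i j =>
        ((mellin_entry_continuous G i j).tendsto 0).mono_left nhdsWithin_le_nhds
    rw [lamTwo_mellinLap_zero hG hN] at h1
    have hN0 : (N:ℝ) ≠ 0 := Nat.cast_ne_zero.mpr (by omega)
    have h2 := h1.div_const (N:ℝ)
    rwa [div_self hN0] at h2
  · rw [← pathLaplacian_one_eq G]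
    exact tendsto_lamTwo hN fun i j => mellin_entry_tendsto_atTop hG hN i j
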